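/- arXiv:2510.05098 — 13 statements merged into one kernel-verified Lean document; each statement's English description precedes it below -/
import Mathlib

section
/- Let (W,b) be a TLN on n nodes and suppose k input dominates j. Then for every x ∈ ℝ^n with all coordinates nonnegative, one has −x_j + y_j(x) ≤ −x_k + y_k(x), where y_i(x) = Σ_{ℓ=1}^n W_{iℓ} x_ℓ + b_i. -/
/-- The input `y_i(x) = Σ_ℓ W_{iℓ} x_ℓ + b_i` to node `i` in a threshold-linear network. -/
noncomputable def tlnY {ι : Type} [Fintype ι] (W : ι → ι → ℝ) (b : ι → ℝ)
    (x : ι → ℝ) (i : ι) : ℝ :=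
  (∑ l, W i l * x l) + b i

/-- Node `k` input dominates node `j` in the TLN `(W,b)`. -/
def InputDominates {ι : Type} (W : ι → ι → ℝ) (b : ι → ℝ) (k j : ι) : Prop :=
  (∀ i, i ≠ j → i ≠ k → W j i ≤ W k i) ∧
  (-1 + W j j < W k j) ∧
  (W j k < -1 + W k k) ∧
  b j ≤ b k

/-- if `k` input dominates `j`, then `-x_j + y_j(x) ≤ -x_k + y_k(x)` for all
`x ∈ ℝ^n_{≥0}`. -/
theorem input_domination_ineq {n : ℕ} (W : Fin n → Fin n → ℝ) (b : Fin n → ℝ) (k j : Fin n)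
    (hdom : InputDominates W b k j) (x : Fin n → ℝ) (hx : ∀ i, 0 ≤ x i) :
    -x j + tlnY W b x j ≤ -x k + tlnY W b x k := by
  obtain ⟨h1, h2, h3, h4⟩ := hdom
  have hsum : ∑ l, (W j l * x l - (if l = j then x l else 0)) ≤
      ∑ l, (W k l * x l - (if l = k then x l else 0)) := by
    apply Finset.sum_le_sum
    intro l _
    by_cases hlj : l = j
    · subst hlj
      have hlk : l ≠ k := by
        rintro rfl; nlinarith
      simp only [if_pos rfl, if_neg hlk, eq_self_iff_true, if_true]
      nlinarith [hx l]
    · by_cases hlk : l = k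
      · subst hlk
        simp only [if_neg hlj, if_pos rfl, eq_self_iff_true, if_true]
        nlinarith [hx l]
      · simp only [if_neg hlj, if_neg hlk]
        have := h1 l hlj hlk
        nlinarith [hx l]
  have hj : ∑ l, (W j l * x l - (if l = j then x l else 0)) =
      (∑ l, W j l * x l) - x j := by
    rw [Finset.sum_sub_distrib, Finset.sum_ite_eq' Finset.univ j x]
    simp
  have hk : ∑ l, (W k l * x l - (if l = k then x l else 0)) =
      (∑ l, W k l * x l) - x k := by
    rw [Finset.sum_sub_distrib, Finset.sum_ite_eq' Finset.univ k x]
    simp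
  rw [hj, hk] at hsum
  simp only [tlnY]
  linarith
end

section
/- Let (W,b) be a TLN on n nodes and suppose k input dominates j. If x ∈ ℝ^n has all coordinates nonnegative and in addition x_j > 0, or x_k > 0, or b_k > b_j, then the strict inequality −x_j + y_j(x) < −x_k + y_k(x) holds, where y_i(x) = Σ_{ℓ=1}^n W_{iℓ} x_ℓ + b_i. -/
/-- if `k` input dominates `j`, `x ∈ ℝ^n_{≥0}`, and moreover `x_j > 0` or
`x_k > 0` or `b_k > b_j`, then `-x_j + y_j(x) < -x_k + y_k(x)` strictly. -/
theorem input_domination_strict_ineq {n : ℕ} (W : Fin n → Fin n → ℝ) (b : Fin n → ℝ)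
    (k j : Fin n) (hdom : InputDominates W b k j) (x : Fin n → ℝ) (hx : ∀ i, 0 ≤ x i)
    (hstrict : 0 < x j ∨ 0 < x k ∨ b j < b k) :
    -x j + tlnY W b x j < -x k + tlnY W b x k := by
  obtain ⟨h1, h2, h3, h4⟩ := hdom
  set A : Fin n → ℝ := fun l => (W j l - (if l = j then 1 else 0)) * x l with hA
  set B : Fin n → ℝ := fun l => (W k l - (if l = k then 1 else 0)) * x l with hB
  have hxj : -x j + tlnY W b x j = (∑ l, A l) + b j := by
    simp only [tlnY, hA, sub_mul, Finset.sum_sub_distrib, ite_mul, one_mul, zero_mul,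
      Finset.sum_ite_eq', Finset.mem_univ, if_true]
    ring
  have hxk : -x k + tlnY W b x k = (∑ l, B l) + b k := by
    simp only [tlnY, hB, sub_mul, Finset.sum_sub_distrib, ite_mul, one_mul, zero_mul,
      Finset.sum_ite_eq', Finset.mem_univ, if_true]
    ring
  have hjk : j ≠ k := by
    intro h; subst h; linarith
  have hle : ∀ l : Fin n, A l ≤ B l := by
    intro l
    by_cases hlj : l = j
    · subst hlj
      simp only [hA, hB, if_pos rfl, if_true, if_neg hjk]
      have := hx l
      nlinarith
    · by_cases hlk : l = k
      · subst hlk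
        simp only [hA, hB, if_neg (Ne.symm hjk), if_pos rfl, if_true]
        have := hx l
        nlinarith
      · simp only [hA, hB, if_neg hlj, if_neg hlk, sub_zero]
        exact mul_le_mul_of_nonneg_right (h1 l hlj hlk) (hx l)
  rw [hxj, hxk]
  rcases hstrict with hj | hk | hb
  · have hlt : ∑ l, A l < ∑ l, B l := by
      apply Finset.sum_lt_sum (fun l _ => hle l) ⟨j, Finset.mem_univ j, ?_⟩
      simp only [hA, hB, if_pos rfl, if_true, if_neg hjk, sub_zero]
      exact mul_lt_mul_of_pos_right (by linarith) hj
    linarith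
  · have hlt : ∑ l, A l < ∑ l, B l := by
      apply Finset.sum_lt_sum (fun l _ => hle l) ⟨k, Finset.mem_univ k, ?_⟩
      simp only [hA, hB, if_neg (Ne.symm hjk), if_pos rfl, if_true, sub_zero]
      exact mul_lt_mul_of_pos_right (by linarith) hk
    linarith
  · have := Finset.sum_le_sum (fun l (_ : l ∈ Finset.univ) => hle l)
    linarith
end

section
/- Let (W,b) be a TLN on n nodes and suppose k input dominates j. If x ∈ ℝ^n has all coordinates nonnegative and 0 ≤ x_j ≤ x_k, then y_j(x) ≤ y_k(x), where y_i(x) = Σ_{ℓ=1}^n W_{iℓ} x_ℓ + b_i. -/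
/-- if `k` input dominates `j`, `x ∈ ℝ^n_{≥0}`, and `0 ≤ x_j ≤ x_k`, then
`y_j(x) ≤ y_k(x)`. -/
theorem input_domination_y_ineq {n : ℕ} (W : Fin n → Fin n → ℝ) (b : Fin n → ℝ)
    (k j : Fin n) (hdom : InputDominates W b k j) (x : Fin n → ℝ) (hx : ∀ i, 0 ≤ x i)
    (hjk : x j ≤ x k) :
    tlnY W b x j ≤ tlnY W b x k := by
  obtain ⟨h1, h2, h3, h4⟩ := hdom
  by_cases hjk' : j = k
  · subst hjk'; exact le_refl _
  · have hg : ∀ l, (if l = j then -x j else 0) + (if l = k then x k else 0)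
        ≤ (W k l - W j l) * x l := by
      intro l
      by_cases hlj : l = j
      · rw [hlj]
        simp only [if_pos rfl, if_neg hjk', if_true]
        have : (-1 : ℝ) ≤ W k j - W j j := by linarith
        nlinarith [hx j]
      · by_cases hlk : l = k
        · rw [hlk]
          have hkj : ¬ (k = j) := fun h => hjk' h.symm
          simp only [if_neg hkj, if_pos rfl, if_true]
          have : (1 : ℝ) ≤ W k k - W j k := by linarith
          nlinarith [hx k]
        · simp only [if_neg hlj, if_neg hlk]
          have := h1 l hlj hlk
          nlinarith [hx l]
    have hsum := Finset.sum_le_sum (s := Finset.univ) (fun l _ => hg l)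
    have hs1 : ∑ l, ((if l = j then -x j else 0) + (if l = k then x k else 0))
        = -x j + x k := by
      rw [Finset.sum_add_distrib]
      simp [Finset.sum_ite_eq']
    have hs2 : ∑ l, (W k l - W j l) * x l
        = (∑ l, W k l * x l) - ∑ l, W j l * x l := by
      rw [← Finset.sum_sub_distrib]
      congr 1; ext l; ring
    unfold tlnY
    rw [hs1, hs2] at hsum
    linarith
end

section
/- Suppose k input dominates j in a TLN (W,b) on n nodes. Then there is no fixed point x* of (W,b) with x*_j > 0; equivalently, every fixed point of (W,b) satisfies x*_j = 0. -/
/-- `x` is a fixed point of the TLN `(W,b)`: `x_i = [y_i(x)]₊` for all `i`. -/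
def IsFixedPt {ι : Type} [Fintype ι] (W : ι → ι → ℝ) (b : ι → ℝ) (x : ι → ℝ) : Prop :=
  ∀ i, x i = max (tlnY W b x i) 0

/-- if `k` input dominates `j`, then every fixed point `x*` of `(W,b)`
satisfies `x*_j = 0` (equivalently, there is no fixed point with `x*_j > 0`). -/
theorem no_fixed_point_with_dominated_node {n : ℕ} (W : Fin n → Fin n → ℝ) (b : Fin n → ℝ)
    (k j : Fin n) (hdom : InputDominates W b k j) :
    ∀ x : Fin n → ℝ, IsFixedPt W b x → x j = 0 := by
  obtain ⟨h1, h2, h3, h4⟩ := hdom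
  have hkj : k ≠ j := by
    intro h; subst h; linarith
  intro x hfp
  have hnn : ∀ i, 0 ≤ x i := fun i => (hfp i).ge.trans' (le_max_right _ _)
  by_contra hxj
  have hxjpos : 0 < x j := lt_of_le_of_ne (hnn j) (Ne.symm hxj)
  have hyj : tlnY W b x j = x j := by
    have := hfp j
    rcases max_cases (tlnY W b x j) 0 with ⟨h, _⟩ | ⟨h, _⟩
    · rw [this, h]
    · exfalso; rw [this, h] at hxjpos; exact lt_irrefl 0 hxjpos
  have hyk : tlnY W b x k ≤ x k := (hfp k).ge.trans' (le_max_left _ _)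
  -- key sum comparison
  have hsub : ({j, k} : Finset (Fin n)) ⊆ Finset.univ := Finset.subset_univ _
  have hsplit : ∀ (v : Fin n → ℝ),
      (∑ l, v l) = (∑ l ∈ Finset.univ \ {j, k}, v l) + (v j + v k) := by
    intro v
    rw [← Finset.sum_pair (Ne.symm hkj), Finset.sum_sdiff hsub]
  have hdiff : (∑ l, W k l * x l) - (∑ l, W j l * x l)
      = (∑ l ∈ Finset.univ \ {j, k}, (W k l - W j l) * x l)
        + ((W k j - W j j) * x j + (W k k - W j k) * x k) := by
    rw [hsplit (fun l => W k l * x l), hsplit (fun l => W j l * x l)]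
    simp only [sub_mul]
    rw [Finset.sum_sub_distrib]
    ring
  have hrest : 0 ≤ ∑ l ∈ Finset.univ \ {j, k}, (W k l - W j l) * x l := by
    apply Finset.sum_nonneg
    intro l hl
    simp only [Finset.mem_sdiff, Finset.mem_insert, Finset.mem_singleton] at hl
    push_neg at hl
    have := h1 l hl.2.1 hl.2.2
    exact mul_nonneg (by linarith) (hnn l)
  have hA : (W k j - W j j) * x j > -x j := by nlinarith
  have hB : (W k k - W j k) * x k ≥ x k := by nlinarith [hnn k]
  have hy : tlnY W b x k - tlnY W b x j > x k - x j := by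
    simp only [tlnY]
    have : (∑ l, W k l * x l) - (∑ l, W j l * x l) > x k - x j := by
      rw [hdiff]; linarith
    linarith
  linarith [hfp k, hfp j]
end

section
/- Let (W,b) be a nondegenerate TLN on n nodes and suppose k input dominates j. Then FP(W,b) = FP(W|_{[n]∖j}, b|_{[n]∖j}), i.e., a subset σ ⊆ [n]∖{j} is the support of a fixed point of (W,b) if and only if it is the support of a fixed point of the restricted TLN on index set [n]∖{j}, and moreover no fixed point support of (W,b) contains j. -/
/-- `FP(W,b)`: the set of supports of fixed points of the TLN `(W,b)`. -/
def FPsupp {ι : Type} [Fintype ι] (W : ι → ι → ℝ) (b : ι → ℝ) : Set (Set ι) :=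
  {σ | ∃ x, IsFixedPt W b x ∧ σ = {i | 0 < x i}}

/-- `(W,b)` is nondegenerate: `det(I - W_σ) ≠ 0` for every `σ ⊆ [n]`. -/
def Nondegenerate {n : ℕ} (W : Fin n → Fin n → ℝ) : Prop :=
  ∀ σ : Finset (Fin n),
    (1 - Matrix.of (fun a c : {v : Fin n // v ∈ σ} => W a.1 c.1)).det ≠ 0

/-- Helper: sum over the subtype `{v ≠ j}` equals the full sum when the `j`-term vanishes. -/
lemma tln_sum_subtype_ne {n : ℕ} (j : Fin n) (g : Fin n → ℝ) (hg : g j = 0) :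
    ∑ l : {v : Fin n // v ≠ j}, g l.1 = ∑ l, g l := by
  rw [← Finset.sum_subtype (Finset.univ.erase j) (by simp) g]
  exact Finset.sum_erase _ hg

/-- Key contradiction lemma from input domination. -/
lemma tln_key {n : ℕ} (W : Fin n → Fin n → ℝ) (b : Fin n → ℝ) (k j : Fin n)
    (hdom : InputDominates W b k j) (x : Fin n → ℝ)
    (hpos : ∀ i, 0 ≤ x i)
    (hxk : x k = max (tlnY W b x k) 0)
    (hj : x j = tlnY W b x j ∨ x j = 0)
    (hyj : 0 < tlnY W b x j) : False := by
  obtain ⟨h1, h2, h3, h4⟩ := hdom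
  have hkj : k ≠ j := by rintro rfl; linarith
  set f : Fin n → ℝ := fun l => (W k l - W j l) * x l with hf
  have hsumf : ∑ l, f l = (∑ l, W k l * x l) - (∑ l, W j l * x l) := by
    rw [← Finset.sum_sub_distrib]
    exact Finset.sum_congr rfl (fun l _ => by simp [hf]; ring)
  have hsum : tlnY W b x k = tlnY W b x j + (∑ l, f l) + (b k - b j) := by
    simp only [tlnY]; rw [hsumf]; ring
  have hge : f j + f k ≤ ∑ l, f l := by
    rw [← Finset.sum_pair (Ne.symm hkj)]
    apply Finset.sum_le_sum_of_subset_of_nonneg (Finset.subset_univ _)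
    intro i _ hi
    simp only [Finset.mem_insert, Finset.mem_singleton] at hi
    push_neg at hi
    exact mul_nonneg (sub_nonneg.2 (h1 i hi.1 hi.2)) (hpos i)
  have hfk : x k ≤ f k := by
    have h1le : (1:ℝ) ≤ W k k - W j k := by linarith
    calc x k = 1 * x k := (one_mul _).symm
    _ ≤ (W k k - W j k) * x k := mul_le_mul_of_nonneg_right h1le (hpos k)
  have hfj : 0 < tlnY W b x j + f j := by
    rcases hj with h | h
    · have hxj : 0 < x j := h ▸ hyj
      have hfj' : f j = (W k j - W j j) * x j := rfl
      nlinarith [mul_pos hxj (show (0:ℝ) < 1 + W k j - W j j by linarith)]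
    · have : f j = 0 := by simp [hf, h]
      linarith
  have hyk : x k < tlnY W b x k := by
    rw [hsum]; linarith
  have : tlnY W b x k ≤ x k := hxk ▸ le_max_left _ _
  linarith

/-- Any fixed point of a TLN with input domination has `x j = 0`. -/
lemma tln_xj_zero {n : ℕ} (W : Fin n → Fin n → ℝ) (b : Fin n → ℝ) (k j : Fin n)
    (hdom : InputDominates W b k j) (x : Fin n → ℝ) (hfix : IsFixedPt W b x) :
    x j = 0 := by
  have hpos : ∀ i, 0 ≤ x i := fun i => (hfix i) ▸ le_max_right _ _
  by_contra h
  have hxj : 0 < x j := lt_of_le_of_ne (hpos j) (Ne.symm h)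
  have hyj : x j = tlnY W b x j := by
    rcases le_or_gt (tlnY W b x j) 0 with h' | h'
    · have := hfix j
      rw [max_eq_right h'] at this
      exact absurd this h
    · have := hfix j
      rw [max_eq_left h'.le] at this
      exact this
  exact tln_key W b k j hdom x hpos (hfix k) (Or.inl hyj) (hyj ▸ hxj)

/-- Restricted `tlnY` agrees with the full one when `x j = 0`. -/
lemma tln_restrict {n : ℕ} (W : Fin n → Fin n → ℝ) (b : Fin n → ℝ) (j : Fin n)
    (x : Fin n → ℝ) (hxj : x j = 0) (a : {i : Fin n // i ≠ j}) :
    tlnY (fun a c : {i : Fin n // i ≠ j} => W a.1 c.1) (fun a => b a.1)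
      (fun c => x c.1) a = tlnY W b x a.1 := by
  unfold tlnY
  have := tln_sum_subtype_ne j (fun l => W a.1 l * x l) (by simp [hxj])
  rw [← this]

/-- if `(W,b)` is nondegenerate and `k` input dominates `j`, then no fixed point
support of `(W,b)` contains `j`, and a subset `σ ⊆ [n]∖{j}` is a fixed point support of
`(W,b)` iff it is one of the restricted TLN `(W|_{[n]∖j}, b|_{[n]∖j})`. -/
theorem FP_eq_of_input_domination {n : ℕ} (W : Fin n → Fin n → ℝ) (b : Fin n → ℝ)
    (hnd : Nondegenerate W) (k j : Fin n) (hdom : InputDominates W b k j) :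
    (∀ σ ∈ FPsupp W b, j ∉ σ) ∧
    (∀ σ : Set {i : Fin n // i ≠ j},
      Subtype.val '' σ ∈ FPsupp W b ↔
        σ ∈ FPsupp (fun a c : {i : Fin n // i ≠ j} => W a.1 c.1) (fun a => b a.1)) := by
  have hkj : k ≠ j := by
    obtain ⟨_, _, h3, _⟩ := hdom
    rintro rfl; linarith
  constructor
  · rintro σ ⟨x, hfix, rfl⟩ hjσ
    have : x j = 0 := tln_xj_zero W b k j hdom x hfix
    simp only [Set.mem_setOf_eq, this] at hjσ
    exact lt_irrefl 0 hjσ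
  · intro σ
    constructor
    · rintro ⟨x, hfix, hsupp⟩
      have hxj : x j = 0 := tln_xj_zero W b k j hdom x hfix
      refine ⟨fun a => x a.1, fun a => ?_, ?_⟩
      · rw [tln_restrict W b j x hxj a]; exact hfix a.1
      · ext a
        simp only [Set.mem_setOf_eq]
        constructor
        · intro ha
          have : a.1 ∈ Subtype.val '' σ := ⟨a, ha, rfl⟩
          rw [hsupp] at this; exact this
        · intro ha
          have h2 : a.1 ∈ Subtype.val '' σ := by rw [hsupp]; exact ha
          obtain ⟨c, hc, hca⟩ := h2
          exact Subtype.ext hca ▸ hc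
    · rintro ⟨x', hfix', rfl⟩
      set x : Fin n → ℝ := fun i => if h : i = j then 0 else x' ⟨i, h⟩ with hxdef
      have hxj : x j = 0 := by simp [hxdef]
      have hxa : ∀ a : {i : Fin n // i ≠ j}, x a.1 = x' a := by
        intro a; simp only [hxdef, dif_neg a.2]
      have hxeq : (fun c : {i : Fin n // i ≠ j} => x c.1) = x' := funext hxa
      have hrest : ∀ a : {i : Fin n // i ≠ j},
          tlnY W b x a.1 =
            tlnY (fun a c : {i : Fin n // i ≠ j} => W a.1 c.1) (fun a => b a.1) x' a := by
        intro a
        rw [← tln_restrict W b j x hxj a, hxeq]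
      have hpos : ∀ i, 0 ≤ x i := by
        intro i
        by_cases h : i = j
        · simp [hxdef, h]
        · rw [hxa ⟨i, h⟩, hfix' ⟨i, h⟩]; exact le_max_right _ _
      have hfixk : x k = max (tlnY W b x k) 0 := by
        rw [hxa ⟨k, hkj⟩, hfix' ⟨k, hkj⟩, ← hrest ⟨k, hkj⟩]
      have hyj : tlnY W b x j ≤ 0 := by
        by_contra h
        push_neg at h
        exact tln_key W b k j hdom x hpos hfixk (Or.inr hxj) h
      refine ⟨x, ?_, ?_⟩
      · intro i
        by_cases h : i = j
        · subst h; rw [hxj, max_eq_right hyj]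
        · rw [hxa ⟨i, h⟩, hfix' ⟨i, h⟩, ← hrest ⟨i, h⟩]
      · ext i
        simp only [Set.mem_image, Set.mem_setOf_eq]
        constructor
        · rintro ⟨a, ha, rfl⟩
          rw [hxa a]; exact ha
        · intro hi
          have hij : i ≠ j := by
            rintro rfl; rw [hxj] at hi; exact lt_irrefl 0 hi
          exact ⟨⟨i, hij⟩, by rw [← hxa ⟨i, hij⟩]; exact hi, rfl⟩
end

section
/- Let (W,b) be a TLN on n nodes in which k input dominates j, and let x* be a fixed point of the restricted TLN (W|_{[n]∖j}, b|_{[n]∖j}). Define x̂* ∈ ℝ^n by x̂*_j = 0 and x̂*_i = x*_i for all i ∈ [n]∖{j}. Then x̂* is a fixed point of (W,b). -/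
/-- if `k` input dominates `j` in `(W,b)` and `x*` is a fixed point of the
restricted TLN `(W|_{[n]∖j}, b|_{[n]∖j})`, then the extension `xh*` of `x*` by `xh*_j = 0`
is a fixed point of `(W,b)`. -/
theorem extension_is_fixed_point {n : ℕ} (W : Fin n → Fin n → ℝ) (b : Fin n → ℝ)
    (k j : Fin n) (hdom : InputDominates W b k j)
    (x : {i : Fin n // i ≠ j} → ℝ)
    (hx : IsFixedPt (fun a c : {i : Fin n // i ≠ j} => W a.1 c.1) (fun a => b a.1) x) :
    IsFixedPt W b (fun i => if h : i = j then 0 else x ⟨i, h⟩) := by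
  obtain ⟨hW, hjj, hkk, hb⟩ := hdom
  set xh : Fin n → ℝ := fun i => if h : i = j then 0 else x ⟨i, h⟩ with hxh
  have hkj : k ≠ j := by
    intro h; subst h; linarith
  have hxnn : ∀ l, 0 ≤ x l := by
    intro l; rw [hx l]; exact le_max_right _ _
  -- sums of xh equal subtype sums
  have hsum : ∀ i : Fin n, (∑ l, W i l * xh l) = ∑ l : {l : Fin n // l ≠ j}, W i l.1 * x l := by
    intro i
    rw [← Finset.sum_erase_add _ _ (Finset.mem_univ j)]
    have h0 : xh j = 0 := by simp [hxh]
    rw [h0, mul_zero, add_zero]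
    rw [Finset.sum_subtype (p := fun l : Fin n => l ≠ j) (Finset.univ.erase j)
      (by intro a; simp)]
    refine Finset.sum_congr rfl ?_
    intro a _
    simp [hxh, a.2]
  intro i
  by_cases hij : i = j
  · subst hij
    have h0 : xh i = 0 := by simp [hxh]
    rw [h0]
    symm
    rw [max_eq_right]
    -- show tlnY W b xh i ≤ 0
    unfold tlnY
    rw [hsum i]
    set k' : {l : Fin n // l ≠ i} := ⟨k, hkj⟩ with hk'
    have hsplitj : (∑ l : {l : Fin n // l ≠ i}, W i l.1 * x l)
        = W i k * x k' + ∑ l ∈ Finset.univ.erase k', W i l.1 * x l := by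
      exact (Finset.add_sum_erase _ _ (Finset.mem_univ k')).symm
    have hsplitk : (∑ l : {l : Fin n // l ≠ i}, W k l.1 * x l)
        = W k k * x k' + ∑ l ∈ Finset.univ.erase k', W k l.1 * x l := by
      exact (Finset.add_sum_erase _ _ (Finset.mem_univ k')).symm
    have hSle : (∑ l ∈ Finset.univ.erase k', W i l.1 * x l)
        ≤ ∑ l ∈ Finset.univ.erase k', W k l.1 * x l := by
      refine Finset.sum_le_sum ?_
      intro l hl
      have hlk : l.1 ≠ k := by
        intro h
        exact (Finset.mem_erase.mp hl).1 (Subtype.ext h)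
      exact mul_le_mul_of_nonneg_right (hW l.1 l.2 hlk) (hxnn l)
    have hxk := hx k'
    simp only [tlnY] at hxk
    rw [hsplitk] at hxk
    have hxk1 : W k k * x k' + (∑ l ∈ Finset.univ.erase k', W k l.1 * x l) + b k ≤ x k' := by
      conv_rhs => rw [hxk]
      exact le_max_left _ _
    have hxknn : 0 ≤ x k' := hxnn k'
    rw [hsplitj]
    nlinarith [hSle, hxk1, hxknn, hkk]
  · have hxi := hx ⟨i, hij⟩
    simp only [tlnY] at hxi ⊢
    have : xh i = x ⟨i, hij⟩ := by simp [hxh, hij]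
    rw [this, hsum i]
    exact hxi
end

section
/- Let G be a simple directed graph on vertex set [n] and suppose k graphically dominates j in G. Then for any E-I TLN (W',b') constructed from G with parameters a_i > 0 and 1 < c_i < 1 + a_i (i ∈ [n]) and θ > 0, node k input dominates node j in (W',b'). -/
/-- Node `k` graphically dominates node `j` in the directed graph `G`:
every `i ∉ {j,k}` with `i → j` also has `i → k`, `j → k`, and `k ↛ j`. -/
def GraphDominates {V : Type} (G : V → V → Prop) (k j : V) : Prop :=
  (∀ i, i ≠ j → i ≠ k → G i j → G i k) ∧ G j k ∧ ¬ G k j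

open Classical in
/-- The weight matrix of the E-I TLN constructed from the graph `G` with parameters `a, c`.
Excitatory nodes are `Sum.inl i`, and the inhibitory node `I` is `Sum.inr ()`.
For `i ≠ l`: `W'_{il} = a_l` if `l → i`, else `0`; `W'_{ii} = c_i`; `W'_{iI} = -1`;
`W'_{Il} = c_l`; `W'_{II} = 0`. -/
noncomputable def eiW {V : Type} [DecidableEq V] (G : V → V → Prop) (a c : V → ℝ) :
    (V ⊕ Unit) → (V ⊕ Unit) → ℝ
  | Sum.inl i, Sum.inl l => if i = l then c i else if G l i then a l else 0
  | Sum.inl _, Sum.inr _ => -1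
  | Sum.inr _, Sum.inl l => c l
  | Sum.inr _, Sum.inr _ => 0

/-- The external input of the E-I TLN: `b'_i = θ` for excitatory `i`, `b'_I = 0`. -/
noncomputable def eiB {V : Type} (θ : ℝ) : (V ⊕ Unit) → ℝ :=
  Sum.elim (fun _ => θ) (fun _ => 0)

/-- if `k` graphically dominates `j` in a simple directed graph `G`, then `k`
input dominates `j` in any E-I TLN constructed from `G` with parameters `a_i > 0`,
`1 < c_i < 1 + a_i`, `θ > 0`. -/
theorem graphical_implies_input_domination_EI {n : ℕ} (G : Fin n → Fin n → Prop)
    (hG : ∀ i, ¬ G i i) (k j : Fin n) (hdom : GraphDominates G k j)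
    (a c : Fin n → ℝ) (ha : ∀ i, 0 < a i) (hc : ∀ i, 1 < c i ∧ c i < 1 + a i)
    (θ : ℝ) (hθ : 0 < θ) :
    InputDominates (eiW G a c) (eiB θ) (Sum.inl k) (Sum.inl j) := by
  obtain ⟨h1, hjk, hkj⟩ := hdom
  have hne : k ≠ j := by
    rintro rfl; exact hG k hjk
  refine ⟨?_, ?_, ?_, le_refl _⟩
  · rintro (m | u) hm1 hm2
    · have hmj : m ≠ j := fun h => hm1 (by rw [h])
      have hmk : m ≠ k := fun h => hm2 (by rw [h])
      simp only [eiW, if_neg (Ne.symm hmj), if_neg (Ne.symm hmk)]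
      by_cases hGmj : G m j
      · rw [if_pos hGmj, if_pos (h1 m hmj hmk hGmj)]
      · rw [if_neg hGmj]
        split <;> [exact (ha m).le; exact le_refl 0]
    · simp [eiW]
  · simp only [eiW, if_neg hne, if_pos hjk, eq_self_iff_true, if_true]
    linarith [(hc j).2]
  · simp only [eiW, if_neg hne.symm, if_neg hkj, eq_self_iff_true, if_true]
    linarith [(hc k).1]
end

section
/- (Theorem 1, gCTLN case.) Let G be a simple directed graph on [n] and suppose j is a dominated node of G, i.e., some k graphically dominates j. Then for any choice of parameters ε_i ∈ (0,1), δ_i > 0 (i ∈ [n]) and θ > 0, the gCTLN constructed from G and the gCTLN constructed from the induced subgraph G|_{[n]∖j} (with the restricted parameters) have the same set of fixed point supports: FP(G) = FP(G|_{[n]∖j}). -/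
open Classical in
/-- The weight matrix of the gCTLN constructed from the graph `G` with parameters `ε, δ`. -/
noncomputable def gctlnW {V : Type} (G : V → V → Prop) (ε δ : V → ℝ) : V → V → ℝ :=
  fun i l => if i = l then 0 else if G l i then -1 + ε l else -1 - δ l

open Classical

lemma sum_split {n : ℕ} (j : Fin n) (f : Fin n → ℝ) :
    ∑ l, f l = f j + ∑ l : {i : Fin n // i ≠ j}, f l.1 := by
  rw [← Finset.sum_subtype (Finset.univ.erase j)
      (fun x => by simp [Finset.mem_erase]) f]
  exact (Finset.add_sum_erase _ f (Finset.mem_univ j)).symm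

lemma key_ineq {n : ℕ} {G : Fin n → Fin n → Prop} (hG : ∀ i, ¬ G i i)
    {k j : Fin n} (hd : GraphDominates G k j)
    {ε δ : Fin n → ℝ} (hε : ∀ i, 0 < ε i ∧ ε i < 1) (hδ : ∀ i, 0 < δ i)
    {θ : ℝ} {x : Fin n → ℝ} (hx : ∀ i, 0 ≤ x i) :
    (ε j - 1) * x j + (1 + δ k) * x k ≤
      tlnY (gctlnW G ε δ) (fun _ => θ) x k - tlnY (gctlnW G ε δ) (fun _ => θ) x j := by
  obtain ⟨h1, hjk, hkj⟩ := hd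
  have hkj' : k ≠ j := by rintro rfl; exact hG _ hjk
  have hsum : tlnY (gctlnW G ε δ) (fun _ => θ) x k - tlnY (gctlnW G ε δ) (fun _ => θ) x j
      = ∑ l, (gctlnW G ε δ k l - gctlnW G ε δ j l) * x l := by
    simp [tlnY, ← Finset.sum_sub_distrib, sub_mul]
  rw [hsum]
  have hgoal : (ε j - 1) * x j + (1 + δ k) * x k
      = ∑ l, ((if l = j then ε j - 1 else 0) + (if l = k then 1 + δ k else 0)) * x l := by
    simp [add_mul, ite_mul, Finset.sum_add_distrib]
  rw [hgoal]
  apply Finset.sum_le_sum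
  intro l _
  rcases eq_or_ne l j with h | hlj
  · rw [h]
    have hW : gctlnW G ε δ k j - gctlnW G ε δ j j = ε j - 1 := by
      simp [gctlnW, hkj', hjk]; ring
    rw [hW]; simp [hkj'.symm]
  · rcases eq_or_ne l k with h | hlk
    · rw [h]
      have hjk2 : j ≠ k := fun h2 => hkj' h2.symm
      have hW : gctlnW G ε δ k k - gctlnW G ε δ j k = 1 + δ k := by
        simp [gctlnW, hjk2, hkj]
        ring
      rw [hW]; simp [hkj']
    · have hdiff : 0 ≤ gctlnW G ε δ k l - gctlnW G ε δ j l := by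
        have hjl : j ≠ l := fun h => hlj h.symm
        have hkl : k ≠ l := fun h => hlk h.symm
        by_cases h : G l j
        · have h2 : G l k := h1 l hlj hlk h
          simp [gctlnW, hjl, hkl, h, h2]
        · simp only [gctlnW, if_neg hjl, if_neg hkl, if_neg h]
          by_cases h2 : G l k
          · simp only [if_pos h2]
            nlinarith [(hε l).1, hδ l]
          · simp [h2]
      have := mul_nonneg hdiff (hx l)
      simpa [hlj, hlk] using this

lemma gctlnW_subtype {n : ℕ} (G : Fin n → Fin n → Prop) (ε δ : Fin n → ℝ) (j : Fin n)
    (u v : {i : Fin n // i ≠ j}) :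
    gctlnW (fun u v : {i : Fin n // i ≠ j} => G u.1 v.1)
      (fun u => ε u.1) (fun u => δ u.1) u v = gctlnW G ε δ u.1 v.1 := by
  unfold gctlnW
  by_cases h : u = v
  · simp [h]
  · have h2 : u.1 ≠ v.1 := fun h3 => h (Subtype.ext h3)
    simp [h, h2]

lemma fp_nonneg {ι : Type} [Fintype ι] {W : ι → ι → ℝ} {b : ι → ℝ} {x : ι → ℝ}
    (hx : IsFixedPt W b x) (i : ι) : 0 ≤ x i := (hx i) ▸ le_max_right _ _

lemma tlnY_sub_eq {n : ℕ} (G : Fin n → Fin n → Prop) (ε δ : Fin n → ℝ) (θ : ℝ)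
    (j : Fin n) (x : Fin n → ℝ) (hxj : x j = 0) (u : {i : Fin n // i ≠ j}) :
    tlnY (gctlnW (fun u v : {i : Fin n // i ≠ j} => G u.1 v.1)
        (fun u => ε u.1) (fun u => δ u.1)) (fun _ => θ) (fun v => x v.1) u
      = tlnY (gctlnW G ε δ) (fun _ => θ) x u.1 := by
  unfold tlnY
  congr 1
  rw [sum_split j (fun l => gctlnW G ε δ u.1 l * x l)]
  simp [hxj, gctlnW_subtype]

lemma xj_eq_zero {n : ℕ} {G : Fin n → Fin n → Prop} (hG : ∀ i, ¬ G i i)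
    {k j : Fin n} (hd : GraphDominates G k j)
    {ε δ : Fin n → ℝ} (hε : ∀ i, 0 < ε i ∧ ε i < 1) (hδ : ∀ i, 0 < δ i)
    {θ : ℝ} {x : Fin n → ℝ} (hx : IsFixedPt (gctlnW G ε δ) (fun _ => θ) x) :
    x j = 0 := by
  by_contra h
  have hnn := fp_nonneg hx
  have hxj : 0 < x j := lt_of_le_of_ne (hnn j) (Ne.symm h)
  have hyj : tlnY (gctlnW G ε δ) (fun _ => θ) x j = x j := by
    have := hx j
    rcases max_cases (tlnY (gctlnW G ε δ) (fun _ => θ) x j) 0 with ⟨h1, _⟩ | ⟨h1, _⟩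
    · rw [this, h1]
    · rw [this, h1] at hxj; exact absurd hxj (lt_irrefl 0)
  have hyk : tlnY (gctlnW G ε δ) (fun _ => θ) x k ≤ x k := (hx k) ▸ le_max_left _ _
  have key := key_ineq hG hd hε hδ (θ := θ) hnn
  nlinarith [(hε j).1, hδ k, hnn k]


/-- Theorem 1, gCTLN case: if `j` is a dominated node of the simple directed
graph `G`, then for any parameters `ε_i ∈ (0,1)`, `δ_i > 0`, `θ > 0`, the gCTLN of `G` and
the gCTLN of the induced subgraph `G|_{[n]∖j}` (with restricted parameters) have the same
fixed point supports, identifying subsets of `[n]∖{j}` with their images in `[n]`. -/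
theorem thm1_gCTLN {n : ℕ} (G : Fin n → Fin n → Prop) (hG : ∀ i, ¬ G i i)
    (j : Fin n) (hj : ∃ k, GraphDominates G k j)
    (ε δ : Fin n → ℝ) (hε : ∀ i, 0 < ε i ∧ ε i < 1) (hδ : ∀ i, 0 < δ i)
    (θ : ℝ) (hθ : 0 < θ) :
    FPsupp (gctlnW G ε δ) (fun _ => θ) =
      (Set.image (Subtype.val : {i : Fin n // i ≠ j} → Fin n)) ''
        FPsupp (gctlnW (fun u v : {i : Fin n // i ≠ j} => G u.1 v.1)
          (fun u => ε u.1) (fun u => δ u.1)) (fun _ => θ) := by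
  obtain ⟨k, hd⟩ := hj
  ext σ
  constructor
  · rintro ⟨x, hx, rfl⟩
    have hxj : x j = 0 := xj_eq_zero hG hd hε hδ hx
    refine ⟨{u | 0 < x u.1}, ⟨fun v => x v.1, ?_, rfl⟩, ?_⟩
    · intro u
      rw [tlnY_sub_eq G ε δ θ j x hxj u]
      exact hx u.1
    · ext i
      simp only [Set.mem_image, Set.mem_setOf_eq]
      constructor
      · rintro ⟨u, hu, rfl⟩; exact hu
      · intro hi
        have hij : i ≠ j := fun h => by rw [h, hxj] at hi; exact lt_irrefl 0 hi
        exact ⟨⟨i, hij⟩, hi, rfl⟩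
  · rintro ⟨τ, ⟨x', hx', rfl⟩, rfl⟩
    classical
    set x : Fin n → ℝ := fun i => if h : i = j then 0 else x' ⟨i, h⟩ with hxdef
    have hxj : x j = 0 := by simp [hxdef]
    have hx'eq : x' = fun v : {i : Fin n // i ≠ j} => x v.1 := by
      funext v; simp [hxdef, v.2]
    have hnn : ∀ i, 0 ≤ x i := by
      intro i
      by_cases h : i = j
      · rw [h, hxj]
      · simp only [hxdef, dif_neg h]
        exact fp_nonneg hx' _
    have hfp : IsFixedPt (gctlnW G ε δ) (fun _ => θ) x := by
      intro i
      by_cases h : i = j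
      · subst h
        have hkj : k ≠ i := by
          rintro rfl; exact hG _ hd.2.1
        have hyj : tlnY (gctlnW G ε δ) (fun _ => θ) x i ≤ 0 := by
          have key := key_ineq hG hd hε hδ (θ := θ) hnn
          have hxk : tlnY (gctlnW G ε δ) (fun _ => θ) x k ≤ x k := by
            have h1 := hx' ⟨k, hkj⟩
            rw [hx'eq] at h1
            simp only at h1
            rw [tlnY_sub_eq G ε δ θ i x hxj ⟨k, hkj⟩] at h1
            have h2 : x k = max (tlnY (gctlnW G ε δ) (fun _ => θ) x k) 0 := h1
            rw [h2]
            exact le_max_left _ _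
          rw [hxj] at key
          nlinarith [hδ k, hnn k, mul_nonneg (le_of_lt (hδ k)) (hnn k)]
        rw [hxj, max_eq_right hyj]
      · have h1 := hx' ⟨i, h⟩
        rw [hx'eq] at h1
        rw [tlnY_sub_eq G ε δ θ j x hxj ⟨i, h⟩] at h1
        exact h1
    refine ⟨x, hfp, ?_⟩
    ext i
    simp only [Set.mem_image, Set.mem_setOf_eq]
    constructor
    · rintro ⟨u, hu, rfl⟩
      rw [hx'eq] at hu; exact hu
    · intro hi
      have hij : i ≠ j := fun h => by rw [h, hxj] at hi; exact lt_irrefl 0 hi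
      refine ⟨⟨i, hij⟩, ?_, rfl⟩
      rw [hx'eq]; exact hi
end

section
/- (Theorem 3.) Let G be a simple directed graph on [n], let (W,b) be the gCTLN constructed from G with parameters ε_j ∈ (0,1), δ_j > 0, θ > 0, and let (W',b') be the E-I TLN constructed from G with parameters a_j = ε_j + δ_j, c_j = 1 + δ_j, and the same θ. Then the map φ sending x* = (x*_1,…,x*_n) to x̂* = (x*_1,…,x*_n, x*_I) with x*_I = Σ_{j=1}^n c_j x*_j is a bijection from the set of fixed points of (W,b) onto the set of fixed points of (W',b'). -/
/-- Theorem 3: for a graph `G` with gCTLN parameters `ε_j ∈ (0,1)`, `δ_j > 0`,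
`θ > 0` and corresponding E-I parameters `a_j = ε_j + δ_j`, `c_j = 1 + δ_j`, the map
`φ : x* ↦ (x*, x*_I)` with `x*_I = Σ_j c_j x*_j` is a bijection from the fixed points of the
gCTLN `(W,b)` onto the fixed points of the E-I TLN `(W',b')`. -/
theorem thm3_fixed_point_bijection {n : ℕ} (G : Fin n → Fin n → Prop) (hG : ∀ i, ¬ G i i)
    (ε δ : Fin n → ℝ) (hε : ∀ i, 0 < ε i ∧ ε i < 1) (hδ : ∀ i, 0 < δ i)
    (θ : ℝ) (hθ : 0 < θ) :
    Set.BijOn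
      (fun x : Fin n → ℝ => Sum.elim x (fun _ : Unit => ∑ j, (1 + δ j) * x j))
      {x | IsFixedPt (gctlnW G ε δ) (fun _ => θ) x}
      {x' | IsFixedPt (eiW G (fun j => ε j + δ j) (fun j => 1 + δ j)) (eiB θ) x'} := by
  classical
  set a : Fin n → ℝ := fun j => ε j + δ j with ha
  set c : Fin n → ℝ := fun j => 1 + δ j with hc
  set φ : (Fin n → ℝ) → ((Fin n ⊕ Unit) → ℝ) :=
    fun x => Sum.elim x (fun _ : Unit => ∑ j, c j * x j) with hφ
  -- key computation: inputs to excitatory nodes agree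
  have key : ∀ (x : Fin n → ℝ) (i : Fin n),
      tlnY (eiW G a c) (eiB θ) (φ x) (Sum.inl i)
        = tlnY (gctlnW G ε δ) (fun _ => θ) x i := by
    intro x i
    have h1 : (∑ l : Fin n ⊕ Unit, eiW G a c (Sum.inl i) l * φ x l)
        = (∑ l : Fin n, eiW G a c (Sum.inl i) (Sum.inl l) * x l)
          + (-1) * (∑ j, c j * x j) := by
      rw [Fintype.sum_sum_type]
      simp [φ, eiW]
    have h2 : (∑ l : Fin n, eiW G a c (Sum.inl i) (Sum.inl l) * x l)
          - (∑ j, c j * x j)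
        = ∑ l : Fin n, gctlnW G ε δ i l * x l := by
      rw [← Finset.sum_sub_distrib]
      apply Finset.sum_congr rfl
      intro l _
      rw [← sub_mul]
      congr 1
      by_cases hil : i = l
      · subst hil
        simp [eiW, gctlnW, c]
      · by_cases hGl : G l i
        · simp [eiW, gctlnW, hil, hGl, a, c]; ring
        · simp [eiW, gctlnW, hil, hGl, a, c]; ring
    simp only [tlnY, h1, eiB, Sum.elim_inl]
    linarith [h2]
  -- input to the inhibitory node
  have keyI : ∀ (x' : (Fin n ⊕ Unit) → ℝ),
      tlnY (eiW G a c) (eiB θ) x' (Sum.inr ()) = ∑ j, c j * x' (Sum.inl j) := by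
    intro x'
    simp only [tlnY, Fintype.sum_sum_type, eiB, Sum.elim_inr]
    simp [eiW]
  have hcpos : ∀ j, 0 < c j := fun j => by have := hδ j; simp [c]; linarith
  -- forward: maps fixed points to fixed points
  have hmaps : ∀ x ∈ {x | IsFixedPt (gctlnW G ε δ) (fun _ => θ) x},
      φ x ∈ {x' | IsFixedPt (eiW G a c) (eiB θ) x'} := by
    intro x hx
    have hxnn : ∀ j, 0 ≤ x j := fun j => by rw [hx j]; exact le_max_right _ _
    intro i
    cases i with
    | inl i => simpa [φ, key x i] using hx i
    | inr u =>
      cases u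
      have hsum : 0 ≤ ∑ j, c j * x j :=
        Finset.sum_nonneg fun j _ => mul_nonneg (hcpos j).le (hxnn j)
      rw [keyI (φ x)]
      simp [φ, max_eq_left hsum]
  constructor
  · exact hmaps
  constructor
  · intro x hx y hy hxy
    funext i
    exact congrFun hxy (Sum.inl i)
  · intro x' hx'
    set x : Fin n → ℝ := fun i => x' (Sum.inl i) with hxdef
    have hxnn : ∀ j, 0 ≤ x j := fun j => by
      have := hx' (Sum.inl j); rw [hxdef]; simp only [this]; exact le_max_right _ _
    have hI : x' (Sum.inr ()) = ∑ j, c j * x j := by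
      have := hx' (Sum.inr ())
      rw [keyI] at this
      rw [this]
      exact max_eq_left (Finset.sum_nonneg fun j _ => mul_nonneg (hcpos j).le (hxnn j))
    have hx'eq : x' = φ x := by
      funext i
      cases i with
      | inl i => rfl
      | inr u => cases u; simpa [φ] using hI
    refine ⟨x, ?_, hx'eq.symm⟩
    intro i
    have := hx' (Sum.inl i)
    rw [hx'eq, key x i] at this
    simpa [hxdef, φ] using this
end

section
/- (Persistence of domination.) Let G be a simple directed graph on [n], let j be a dominated node of G, and let d ≠ j be another dominated node of G. Then j is a dominated node of the induced subgraph G|_{[n]∖d} (this holds even if d was the node dominating j in G). -/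
/-- `j` is a dominated node of `G`: some node graphically dominates it. -/
def IsDominatedNode {V : Type} (G : V → V → Prop) (j : V) : Prop :=
  ∃ k, GraphDominates G k j

/-- persistence of domination: if `j` is a dominated node of a simple
directed graph `G` and `d ≠ j` is another dominated node, then `j` is still a dominated
node of the induced subgraph `G|_{[n]∖d}` (even if `d` was the node dominating `j`). -/
theorem dominated_persists {n : ℕ} (G : Fin n → Fin n → Prop) (hG : ∀ i, ¬ G i i)
    (j d : Fin n) (hne : d ≠ j)
    (hj : IsDominatedNode G j) (hd : IsDominatedNode G d) :
    IsDominatedNode (fun u v : {i : Fin n // i ≠ d} => G u.1 v.1) ⟨j, hne.symm⟩ := by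
  obtain ⟨k, hk1, hk2, hk3⟩ := hj
  obtain ⟨m, hm1, hm2, hm3⟩ := hd
  by_cases hkd : k = d
  · subst hkd
    -- d dominates j, m dominates d; show m dominates j in subgraph
    have hmd : m ≠ k := by rintro rfl; exact hG m hm2
    have hmj : m ≠ j := by
      rintro rfl
      -- then m dominates d=k and k dominates j=m: G m k and G k m with ¬G k m
      exact hm3 hk2
    refine ⟨⟨m, hmd⟩, ?_, ?_, ?_⟩
    · rintro ⟨i, hid⟩ hij him hGij
      have hij' : i ≠ j := fun h => hij (Subtype.ext h)
      have him' : i ≠ m := fun h => him (Subtype.ext h)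
      exact hm1 i hid him' (hk1 i hij' hid hGij)
    · exact hm1 j (hne.symm) hmj.symm hk2
    · intro hGmj
      exact hm3 (hk1 m hmj hmd hGmj)
  · refine ⟨⟨k, hkd⟩, ?_, hk2, hk3⟩
    rintro ⟨i, hid⟩ hij hik hGij
    exact hk1 i (fun h => hij (Subtype.ext h)) (fun h => hik (Subtype.ext h)) hGij
end

section
/- (Theorem 2: uniqueness of the reduced graph.) Let G be a simple directed graph on [n]. Suppose j_1,…,j_m is a sequence of distinct vertices such that for each i, the vertex j_i is a dominated node of the induced subgraph G|_{[n]∖{j_1,…,j_{i−1}}}, and the final subgraph G|_{[n]∖{j_1,…,j_m}} is domination free. Suppose ℓ_1,…,ℓ_p is another such sequence, i.e., each ℓ_i is dominated in G|_{[n]∖{ℓ_1,…,ℓ_{i−1}}} and G|_{[n]∖{ℓ_1,…,ℓ_p}} is domination free. Then {j_1,…,j_m} = {ℓ_1,…,ℓ_p} (in particular m = p), and hence the two final induced subgraphs are equal. -/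
/-- `j` is a dominated node of the induced subgraph `G|_S`: `j ∈ S` and some `k ∈ S`
graphically dominates `j` within `S`, i.e. every `i ∈ S∖{j,k}` with `i → j` has `i → k`,
`j → k`, and `k ↛ j`. -/
def DominatedIn {n : ℕ} (G : Fin n → Fin n → Prop) (S : Set (Fin n)) (j : Fin n) : Prop :=
  j ∈ S ∧ ∃ k ∈ S, (∀ i ∈ S, i ≠ j → i ≠ k → G i j → G i k) ∧ G j k ∧ ¬ G k j

/-- The induced subgraph `G|_S` is domination free: it has no dominated nodes. -/
def DominationFreeOn {n : ℕ} (G : Fin n → Fin n → Prop) (S : Set (Fin n)) : Prop :=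
  ∀ j, ¬ DominatedIn G S j

namespace ReducedUnique

variable {n : ℕ} {G : Fin n → Fin n → Prop}

def RemSeq (G : Fin n → Fin n → Prop) : Set (Fin n) → List (Fin n) → Prop
  | _, [] => True
  | S, a :: L => DominatedIn G S a ∧ RemSeq G (S \ {a}) L

lemma persist (hG : ∀ i, ¬ G i i) {S : Set (Fin n)} {v a : Fin n}
    (hv : DominatedIn G S v) (ha : DominatedIn G S a) (hne : v ≠ a) :
    DominatedIn G (S \ {a}) v := by
  obtain ⟨hvS, k, hkS, hfwd, hvk, hkv⟩ := hv
  by_cases hka : k = a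
  · subst hka
    obtain ⟨haS, c, hcS, hcfwd, hac, hca⟩ := ha
    have hck : c ≠ k := fun h => hG k (h ▸ hac)
    have hcv : c ≠ v := fun h => hkv (h ▸ hac)
    refine ⟨⟨hvS, hne⟩, c, ⟨hcS, hck⟩, ?_, ?_, ?_⟩
    · intro i hi hiv hic giv
      exact hcfwd i hi.1 hi.2 hic (hfwd i hi.1 hiv hi.2 giv)
    · exact hcfwd v hvS hne (fun h => hcv h.symm) hvk
    · intro gcv
      exact hca (hfwd c hcS hcv hck gcv)
  · exact ⟨⟨hvS, hne⟩, k, ⟨hkS, hka⟩,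
      fun i hi hiv hik giv => hfwd i hi.1 hiv hik giv, hvk, hkv⟩

lemma remSeq_mem : ∀ {L : List (Fin n)} {S : Set (Fin n)},
    RemSeq G S L → ∀ x ∈ L, x ∈ S
  | [], _, _, x, hx => by simp at hx
  | a :: L, S, ⟨ha, hL⟩, x, hx => by
    rcases List.mem_cons.1 hx with rfl | hx
    · exact ha.1
    · exact (remSeq_mem hL x hx).1

lemma remSeq_nodup : ∀ {L : List (Fin n)} {S : Set (Fin n)}, RemSeq G S L → L.Nodup
  | [], _, _ => List.nodup_nil
  | a :: L, S, ⟨_, hL⟩ => by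
    refine List.nodup_cons.2 ⟨fun hmem => ?_, remSeq_nodup hL⟩
    exact (remSeq_mem hL a hmem).2 rfl

lemma persist_chain (hG : ∀ i, ¬ G i i) :
    ∀ {L : List (Fin n)} {S : Set (Fin n)} {v : Fin n},
    DominatedIn G S v → RemSeq G S L → v ∉ L →
    DominatedIn G (S \ {x | x ∈ L}) v
  | [], S, v, hv, _, _ => by
    have : S \ {x | x ∈ ([] : List (Fin n))} = S := by ext y; simp
    rw [this]; exact hv
  | a :: L, S, v, hv, ⟨ha, hL⟩, hvL => by
    have hne : v ≠ a := fun h => hvL (h ▸ (List.mem_cons_self : a ∈ a :: L))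
    have hv' := persist hG hv ha hne
    have := persist_chain hG hv' hL (fun h => hvL (List.mem_cons_of_mem a h))
    have hset : (S \ {a}) \ {x | x ∈ L} = S \ {x | x ∈ a :: L} := by
      ext y; simp [List.mem_cons]; tauto
    rw [hset] at this; exact this

lemma mem_of_dominated (hG : ∀ i, ¬ G i i) {L : List (Fin n)} {S : Set (Fin n)} {v : Fin n}
    (h : RemSeq G S L) (hfree : DominationFreeOn G (S \ {x | x ∈ L}))
    (hv : DominatedIn G S v) : v ∈ L := by
  by_contra hvL
  exact hfree v (persist_chain hG hv h hvL)

lemma remSeq_erase (hG : ∀ i, ¬ G i i) :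
    ∀ {L : List (Fin n)} {S : Set (Fin n)} {v : Fin n},
    DominatedIn G S v → RemSeq G S L → RemSeq G (S \ {v}) (L.erase v)
  | [], _, _, _, _ => trivial
  | a :: L, S, v, hv, ⟨ha, hL⟩ => by
    by_cases hav : a = v
    · subst hav; rw [List.erase_cons_head]; exact hL
    · rw [List.erase_cons_tail (by simp [hav])]
      refine ⟨persist hG ha hv hav, ?_⟩
      have hv' := persist hG hv ha (Ne.symm hav)
      have := remSeq_erase hG hv' hL
      have hset : (S \ {a}) \ {v} = (S \ {v}) \ {a} := by ext y; simp; tauto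
      rw [hset] at this; exact this

lemma remSeq_unique (hG : ∀ i, ¬ G i i) :
    ∀ (L₁ : List (Fin n)) (S : Set (Fin n)) (L₂ : List (Fin n)),
    RemSeq G S L₁ → DominationFreeOn G (S \ {x | x ∈ L₁}) →
    RemSeq G S L₂ → DominationFreeOn G (S \ {x | x ∈ L₂}) →
    ∀ x, x ∈ L₁ ↔ x ∈ L₂ := by
  intro L₁
  induction L₁ with
  | nil =>
    intro S L₂ _ hfree1 h2 _ x
    have hSfree : DominationFreeOn G S := by
      have : S \ {x | x ∈ ([] : List (Fin n))} = S := by ext y; simp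
      rwa [this] at hfree1
    cases L₂ with
    | nil => simp
    | cons a L => exact absurd h2.1 (hSfree a)
  | cons a L₁ ih =>
    intro S L₂ h1 hfree1 h2 hfree2 x
    obtain ⟨ha, hL₁⟩ := h1
    have haL₂ : a ∈ L₂ := mem_of_dominated hG h2 hfree2 ha
    have hnd₂ : L₂.Nodup := remSeq_nodup h2
    have h2' : RemSeq G (S \ {a}) (L₂.erase a) := remSeq_erase hG ha h2
    have hfree1' : DominationFreeOn G ((S \ {a}) \ {x | x ∈ L₁}) := by
      have hset : (S \ {a}) \ {x | x ∈ L₁} = S \ {x | x ∈ a :: L₁} := by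
        ext y; simp [List.mem_cons]; tauto
      rwa [hset]
    have hfree2' : DominationFreeOn G ((S \ {a}) \ {x | x ∈ L₂.erase a}) := by
      have hset : (S \ {a}) \ {x | x ∈ L₂.erase a} = S \ {x | x ∈ L₂} := by
        ext y
        simp only [Set.mem_diff, Set.mem_setOf_eq, Set.mem_singleton_iff,
          List.Nodup.mem_erase_iff hnd₂]
        constructor
        · rintro ⟨⟨hyS, hya⟩, hne⟩
          exact ⟨hyS, fun hyL => hne ⟨hya, hyL⟩⟩
        · rintro ⟨hyS, hyL⟩
          exact ⟨⟨hyS, fun h => hyL (h ▸ haL₂)⟩, fun h => hyL h.2⟩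
      rwa [hset]
    have key := ih (S \ {a}) (L₂.erase a) hL₁ hfree1' h2' hfree2'
    rw [List.mem_cons, key x, List.Nodup.mem_erase_iff hnd₂]
    constructor
    · rintro (rfl | ⟨_, hx⟩)
      · exact haL₂
      · exact hx
    · intro hx
      by_cases hxa : x = a
      · exact Or.inl hxa
      · exact Or.inr ⟨hxa, hx⟩

lemma chain_ofFn {m : ℕ} (j : Fin m → Fin n)
    (hjdom : ∀ i : Fin m, DominatedIn G {v | ∀ i' : Fin m, i' < i → v ≠ j i'} (j i)) :
    ∀ d t, t + d = m →
      RemSeq G {v | ∀ i' : Fin m, (i' : ℕ) < t → v ≠ j i'} ((List.ofFn j).drop t) := by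
  intro d
  induction d with
  | zero =>
    intro t ht
    have : (List.ofFn j).drop t = [] := by
      apply List.drop_eq_nil_of_le; simp; omega
    rw [this]; trivial
  | succ d ih =>
    intro t ht
    have htm : t < m := by omega
    have hdrop : (List.ofFn j).drop t = j ⟨t, htm⟩ :: (List.ofFn j).drop (t + 1) := by
      rw [List.drop_eq_getElem_cons (by simpa using htm)]
      simp
    rw [hdrop]
    constructor
    · have := hjdom ⟨t, htm⟩
      have hset : {v | ∀ i' : Fin m, i' < (⟨t, htm⟩ : Fin m) → v ≠ j i'}
          = {v | ∀ i' : Fin m, (i' : ℕ) < t → v ≠ j i'} := by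
        ext y; simp [Fin.lt_def]
      rwa [hset] at this
    · have hset : {v | ∀ i' : Fin m, (i' : ℕ) < t → v ≠ j i'} \ {j ⟨t, htm⟩}
          = {v | ∀ i' : Fin m, (i' : ℕ) < t + 1 → v ≠ j i'} := by
        ext y
        simp only [Set.mem_diff, Set.mem_setOf_eq, Set.mem_singleton_iff]
        constructor
        · rintro ⟨hy, hne⟩ i' hi'
          rcases Nat.lt_succ_iff_lt_or_eq.1 hi' with h | h
          · exact hy i' h
          · have : i' = ⟨t, htm⟩ := Fin.ext h
            rw [this]; exact hne
        · intro hy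
          exact ⟨fun i' hi' => hy i' (by omega), hy ⟨t, htm⟩ (by simp)⟩
      rw [hset]
      exact ih (t + 1) (by omega)

end ReducedUnique

/-- Theorem 2: uniqueness of the reduced graph: if `j_1,…,j_m` and
`ℓ_1,…,ℓ_p` are two sequences of distinct vertices of a simple directed graph `G`, each
vertex being dominated in the induced subgraph obtained by removing the previous ones, and
both final induced subgraphs are domination free, then `{j_1,…,j_m} = {ℓ_1,…,ℓ_p}` and
`m = p` (hence the two final induced subgraphs are equal). -/
theorem reduced_graph_unique {n m p : ℕ} (G : Fin n → Fin n → Prop) (hG : ∀ i, ¬ G i i)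
    (j : Fin m → Fin n) (hjinj : Function.Injective j)
    (hjdom : ∀ i : Fin m, DominatedIn G {v | ∀ i' : Fin m, i' < i → v ≠ j i'} (j i))
    (hjfree : DominationFreeOn G {v | ∀ i' : Fin m, v ≠ j i'})
    (l : Fin p → Fin n) (hlinj : Function.Injective l)
    (hldom : ∀ i : Fin p, DominatedIn G {v | ∀ i' : Fin p, i' < i → v ≠ l i'} (l i))
    (hlfree : DominationFreeOn G {v | ∀ i' : Fin p, v ≠ l i'}) :
    Set.range j = Set.range l ∧ m = p := by
  have hj := ReducedUnique.chain_ofFn j hjdom m 0 (by omega)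
  have hl := ReducedUnique.chain_ofFn l hldom p 0 (by omega)
  have hSj : {v : Fin n | ∀ i' : Fin m, (i' : ℕ) < 0 → v ≠ j i'} = Set.univ := by
    ext y; simp
  have hSl : {v : Fin n | ∀ i' : Fin p, (i' : ℕ) < 0 → v ≠ l i'} = Set.univ := by
    ext y; simp
  rw [hSj] at hj
  rw [hSl] at hl
  simp only [List.drop_zero] at hj hl
  have hfreej : DominationFreeOn G (Set.univ \ {x | x ∈ List.ofFn j}) := by
    have : (Set.univ \ {x | x ∈ List.ofFn j}) = {v | ∀ i' : Fin m, v ≠ j i'} := by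
      ext y; simp [List.mem_ofFn]
      constructor
      · intro h i' hi'; exact h i' hi'.symm
      · intro h i' hi'; exact h i' hi'.symm
    rwa [this]
  have hfreel : DominationFreeOn G (Set.univ \ {x | x ∈ List.ofFn l}) := by
    have : (Set.univ \ {x | x ∈ List.ofFn l}) = {v | ∀ i' : Fin p, v ≠ l i'} := by
      ext y; simp [List.mem_ofFn]
      constructor
      · intro h i' hi'; exact h i' hi'.symm
      · intro h i' hi'; exact h i' hi'.symm
    rwa [this]
  have key := ReducedUnique.remSeq_unique hG (List.ofFn j) Set.univ (List.ofFn l)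
    hj hfreej hl hfreel
  have hrange : Set.range j = Set.range l := by
    ext x
    have := key x
    simpa [List.mem_ofFn] using this
  refine ⟨hrange, ?_⟩
  have hndj : (List.ofFn j).Nodup := ReducedUnique.remSeq_nodup hj
  have hndl : (List.ofFn l).Nodup := ReducedUnique.remSeq_nodup hl
  have hfs : (List.ofFn j).toFinset = (List.ofFn l).toFinset := by
    ext x; simp only [List.mem_toFinset]; exact key x
  have := congrArg Finset.card hfs
  rwa [List.toFinset_card_of_nodup hndj, List.toFinset_card_of_nodup hndl,
    List.length_ofFn, List.length_ofFn] at this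
end

section
/- (Corollary to Theorems 1 and 2, gCTLN case.) Let G be a simple directed graph on [n] and let G̃ = G|_τ be an induced subgraph obtained from G by iteratively removing dominated nodes (i.e., there is a sequence of distinct vertices j_1,…,j_m with [n]∖τ = {j_1,…,j_m}, each j_i dominated in G|_{[n]∖{j_1,…,j_{i−1}}}) such that G̃ is domination free. Then for any gCTLN parameters ε_i ∈ (0,1), δ_i > 0, θ > 0, the gCTLN of G and the gCTLN of G̃ (with restricted parameters) have the same set of fixed point supports: FP(G) = FP(G̃). -/
namespace FPred

variable {n : ℕ}

/-- `x` is a fixed point of the network restricted to `S` (zero outside `S`). -/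
def FixedOn (W : Fin n → Fin n → ℝ) (b : Fin n → ℝ) (S : Set (Fin n)) (x : Fin n → ℝ) : Prop :=
  (∀ i, i ∉ S → x i = 0) ∧ ∀ i ∈ S, x i = max (tlnY W b x i) 0

lemma FixedOn.nonneg {W b : _} {S : Set (Fin n)} {x : Fin n → ℝ}
    (h : FixedOn W b S x) (i : Fin n) : 0 ≤ x i := by
  by_cases hi : i ∈ S
  · rw [h.2 i hi]; exact le_max_right _ _
  · rw [h.1 i hi]

def FPon (W : Fin n → Fin n → ℝ) (b : Fin n → ℝ) (S : Set (Fin n)) : Set (Set (Fin n)) :=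
  {σ | ∃ x, FixedOn W b S x ∧ σ = {i | 0 < x i}}

section key

variable (G : Fin n → Fin n → Prop) (ε δ : Fin n → ℝ)
/-- The key domination inequality. -/
lemma key_ineq (hε : ∀ i, 0 < ε i ∧ ε i < 1) (hδ : ∀ i, 0 < δ i) (b : Fin n → ℝ) (hb : ∀ i l, b i = b l) (x : Fin n → ℝ) (hx : ∀ l, 0 ≤ x l)
    (j k : Fin n) (hjk : j ≠ k) (hGjk : G j k) (hGkj : ¬ G k j)
    (hdom : ∀ l, l ≠ j → l ≠ k → 0 < x l → G l j → G l k) :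
    (x k - x j) + ε j * x j + δ k * x k ≤
      tlnY (gctlnW G ε δ) b x k - tlnY (gctlnW G ε δ) b x j := by
  classical
  set W := gctlnW G ε δ with hW
  have hdiff : tlnY W b x k - tlnY W b x j = ∑ l, (W k l - W j l) * x l := by
    simp only [tlnY, sub_mul, Finset.sum_sub_distrib, hb k j]
    ring
  rw [hdiff]
  have hjmem : j ∈ (Finset.univ : Finset (Fin n)) := Finset.mem_univ _
  have hkmem : k ∈ Finset.univ.erase j := Finset.mem_erase.mpr ⟨Ne.symm hjk, Finset.mem_univ _⟩
  rw [← Finset.add_sum_erase _ _ hjmem, ← Finset.add_sum_erase _ _ hkmem]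
  have hWjj : W j j = 0 := by simp [hW, gctlnW]
  have hWkj : W k j = -1 + ε j := by
    simp [hW, gctlnW, (Ne.symm hjk : k ≠ j), hGjk]
  have hWkk : W k k = 0 := by simp [hW, gctlnW]
  have hWjk : W j k = -1 - δ k := by
    simp [hW, gctlnW, hjk, hGkj]
  have hrest : 0 ≤ ∑ l ∈ (Finset.univ.erase j).erase k, (W k l - W j l) * x l := by
    apply Finset.sum_nonneg
    intro l hl
    have hlk : l ≠ k := (Finset.mem_erase.mp hl).1
    have hlj : l ≠ j := (Finset.mem_erase.mp (Finset.mem_erase.mp hl).2).1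
    rcases lt_or_eq_of_le (hx l) with hpos | hzero
    · apply mul_nonneg _ (hx l)
      have hWjl : W j l = if G l j then -1 + ε l else -1 - δ l := by
        simp [hW, gctlnW, (Ne.symm hlj : j ≠ l)]
      have hWkl : W k l = if G l k then -1 + ε l else -1 - δ l := by
        simp [hW, gctlnW, (Ne.symm hlk : k ≠ l)]
      rw [hWjl, hWkl]
      by_cases h1 : G l j
      · rw [if_pos (hdom l hlj hlk hpos h1), if_pos h1]; simp
      · rw [if_neg h1]
        by_cases h2 : G l k
        · rw [if_pos h2]
          have := (hε l).1; have := hδ l; linarith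
        · rw [if_neg h2]; simp
    · rw [← hzero]; simp
  have : (W k j - W j j) * x j + (W k k - W j k) * x k
      = (x k - x j) + ε j * x j + δ k * x k := by
    rw [hWjj, hWkj, hWkk, hWjk]; ring
  linarith


/-- At any `S`-restricted fixed point, a node dominated in `G|_S` is off. -/
lemma dominated_zero (hε : ∀ i, 0 < ε i ∧ ε i < 1) (hδ : ∀ i, 0 < δ i)
    (b : Fin n → ℝ) (hb : ∀ i l, b i = b l) {S : Set (Fin n)} {x : Fin n → ℝ}
    (hx : FixedOn (gctlnW G ε δ) b S x) {jj : Fin n} (hd : DominatedIn G S jj) :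
    x jj = 0 := by
  obtain ⟨hjS, k, hkS, hcond, hGjk, hGkj⟩ := hd
  by_contra hne
  have hxj : 0 < x jj := lt_of_le_of_ne (hx.nonneg jj) (Ne.symm hne)
  have hjk : jj ≠ k := by rintro rfl; exact hGkj hGjk
  have hdom : ∀ l, l ≠ jj → l ≠ k → 0 < x l → G l jj → G l k := by
    intro l h1 h2 h3 h4
    have hlS : l ∈ S := by
      by_contra hlS
      rw [hx.1 l hlS] at h3; exact lt_irrefl _ h3
    exact hcond l hlS h1 h2 h4
  have hkey := key_ineq G ε δ hε hδ b hb x hx.nonneg jj k hjk hGjk hGkj hdom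
  set yj := tlnY (gctlnW G ε δ) b x jj with hyj
  set yk := tlnY (gctlnW G ε δ) b x k with hyk
  have hxj' : x jj = yj := by
    have := hx.2 jj hjS
    rcases le_or_gt yj 0 with h | h
    · rw [this, max_eq_right h] at hxj; exact absurd hxj (lt_irrefl 0)
    · rw [this, max_eq_left h.le] at *
  have hxk : x k = max yk 0 := hx.2 k hkS
  have hek : 0 < ε jj * x jj := mul_pos (hε jj).1 hxj
  have hdk : 0 ≤ δ k * x k := mul_nonneg (hδ k).le (hx.nonneg k)
  have hyk' : x k < yk := by linarith [hkey]
  have : yk ≤ max yk 0 := le_max_left _ _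
  rw [← hxk] at this
  linarith

/-- Survival: at a fixed point supported away from a dominated node `jj`,
the input to `jj` is nonpositive. -/
lemma dominated_input_nonpos (hε : ∀ i, 0 < ε i ∧ ε i < 1) (hδ : ∀ i, 0 < δ i)
    (b : Fin n → ℝ) (hb : ∀ i l, b i = b l) {S : Set (Fin n)} {x : Fin n → ℝ}
    {jj : Fin n} (hx : FixedOn (gctlnW G ε δ) b (S \ {jj}) x) (hd : DominatedIn G S jj) :
    tlnY (gctlnW G ε δ) b x jj ≤ 0 := by
  obtain ⟨hjS, k, hkS, hcond, hGjk, hGkj⟩ := hd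
  have hjk : jj ≠ k := by rintro rfl; exact hGkj hGjk
  have hxj : x jj = 0 := hx.1 jj (by simp)
  have hdom : ∀ l, l ≠ jj → l ≠ k → 0 < x l → G l jj → G l k := by
    intro l h1 h2 h3 h4
    have hlS : l ∈ S := by
      by_contra hlS
      rw [hx.1 l (fun h => hlS h.1)] at h3; exact lt_irrefl _ h3
    exact hcond l hlS h1 h2 h4
  have hkey := key_ineq G ε δ hε hδ b hb x hx.nonneg jj k hjk hGjk hGkj hdom
  set yj := tlnY (gctlnW G ε δ) b x jj with hyj
  set yk := tlnY (gctlnW G ε δ) b x k with hyk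
  have hxk : x k = max yk 0 := hx.2 k ⟨hkS, Ne.symm hjk⟩
  have hdk : 0 ≤ δ k * x k := mul_nonneg (hδ k).le (hx.nonneg k)
  rcases le_or_gt yk 0 with h | h
  · have : x k = 0 := by rw [hxk, max_eq_right h]
    rw [hxj, this] at hkey; simp at hkey; linarith
  · have hxky : x k = yk := by rw [hxk, max_eq_left h.le]
    rw [hxj] at hkey; simp at hkey
    nlinarith [hδ k, hx.nonneg k]

/-- Single removal step: removing a dominated node preserves fixed-point supports. -/
lemma FPon_remove (hε : ∀ i, 0 < ε i ∧ ε i < 1) (hδ : ∀ i, 0 < δ i)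
    (b : Fin n → ℝ) (hb : ∀ i l, b i = b l) {S : Set (Fin n)} {jj : Fin n}
    (hd : DominatedIn G S jj) :
    FPon (gctlnW G ε δ) b S = FPon (gctlnW G ε δ) b (S \ {jj}) := by
  ext σ
  constructor
  · rintro ⟨x, hx, rfl⟩
    refine ⟨x, ⟨?_, fun i hi => hx.2 i hi.1⟩, rfl⟩
    intro i hi
    by_cases hij : i = jj
    · subst hij; exact dominated_zero G ε δ hε hδ b hb hx hd
    · exact hx.1 i (fun h => hi ⟨h, hij⟩)
  · rintro ⟨x, hx, rfl⟩
    refine ⟨x, ⟨fun i hi => hx.1 i (fun h => hi h.1), ?_⟩, rfl⟩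
    intro i hi
    by_cases hij : i = jj
    · subst hij
      rw [hx.1 i (by simp), max_eq_right (dominated_input_nonpos G ε δ hε hδ b hb hx hd)]
    · exact hx.2 i ⟨hi, hij⟩


lemma FPsupp_eq_FPon_univ (W : Fin n → Fin n → ℝ) (b : Fin n → ℝ) :
    FPsupp W b = FPon W b Set.univ := by
  ext σ
  constructor
  · rintro ⟨x, hx, rfl⟩
    exact ⟨x, ⟨fun i hi => absurd (Set.mem_univ i) hi, fun i _ => hx i⟩, rfl⟩
  · rintro ⟨x, hx, rfl⟩
    exact ⟨x, fun i => hx.2 i (Set.mem_univ i), rfl⟩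

lemma gctlnW_restrict (τ : Finset (Fin n)) (u v : {v : Fin n // v ∈ τ}) :
    gctlnW (fun a b : {v : Fin n // v ∈ τ} => G a.1 b.1) (fun u => ε u.1) (fun u => δ u.1) u v
      = gctlnW G ε δ u.1 v.1 := by
  by_cases h : u = v
  · subst h; simp [gctlnW]
  · have h' : u.1 ≠ v.1 := fun hh => h (Subtype.ext hh)
    by_cases h2 : G v.1 u.1 <;> simp [gctlnW, h, h', h2]

lemma tlnY_restrict (τ : Finset (Fin n)) (b : Fin n → ℝ) (x : Fin n → ℝ)
    (hx0 : ∀ i, i ∉ (↑τ : Set (Fin n)) → x i = 0) (u : {v : Fin n // v ∈ τ}) :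
    tlnY (gctlnW (fun a b : {v : Fin n // v ∈ τ} => G a.1 b.1)
        (fun u => ε u.1) (fun u => δ u.1)) (fun u => b u.1) (fun u => x u.1) u
      = tlnY (gctlnW G ε δ) b x u.1 := by
  unfold tlnY
  congr 1
  have h1 : ∀ v : {v : Fin n // v ∈ τ},
      gctlnW (fun a b : {v : Fin n // v ∈ τ} => G a.1 b.1)
        (fun u => ε u.1) (fun u => δ u.1) u v * x v.1
      = gctlnW G ε δ u.1 v.1 * x v.1 := fun v => by rw [gctlnW_restrict]
  rw [Finset.sum_congr rfl (fun v _ => h1 v)]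
  rw [Finset.sum_coe_sort τ (fun l => gctlnW G ε δ u.1 l * x l)]
  exact Finset.sum_subset τ.subset_univ
    (fun l _ hl => by rw [hx0 l (by simpa using hl), mul_zero])

/-- Bridge: `τ`-restricted fixed point supports equal subtype-network supports. -/
lemma FPon_coe (τ : Finset (Fin n)) (b : Fin n → ℝ) :
    FPon (gctlnW G ε δ) b ↑τ =
      (Set.image (Subtype.val : {v : Fin n // v ∈ τ} → Fin n)) ''
        FPsupp (gctlnW (fun u v : {v : Fin n // v ∈ τ} => G u.1 v.1)
          (fun u => ε u.1) (fun u => δ u.1)) (fun u => b u.1) := by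
  ext σ
  constructor
  · rintro ⟨x, hx, rfl⟩
    refine ⟨{u | 0 < x u.1}, ⟨fun u => x u.1, ?_, rfl⟩, ?_⟩
    · intro u
      rw [tlnY_restrict G ε δ τ b x hx.1 u]
      exact hx.2 u.1 u.2
    · ext i
      simp only [Set.mem_image, Set.mem_setOf_eq]
      constructor
      · rintro ⟨u, hu, rfl⟩; exact hu
      · intro hi
        have hmem : i ∈ τ := by
          by_contra hmem
          rw [hx.1 i hmem] at hi; exact lt_irrefl _ hi
        exact ⟨⟨i, hmem⟩, hi, rfl⟩
  · rintro ⟨σ', ⟨y, hy, rfl⟩, rfl⟩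
    classical
    set x : Fin n → ℝ := fun i => if h : i ∈ τ then y ⟨i, h⟩ else 0 with hxdef
    have hx0 : ∀ i, i ∉ (↑τ : Set (Fin n)) → x i = 0 := by
      intro i hi; simp only [hxdef]; rw [dif_neg (by simpa using hi)]
    have hxy : ∀ u : {v : Fin n // v ∈ τ}, x u.1 = y u := by
      intro u; simp only [hxdef]; rw [dif_pos u.2]
    refine ⟨x, ⟨hx0, ?_⟩, ?_⟩
    · intro i hi
      have hmem : i ∈ τ := by simpa using hi
      have := hy ⟨i, hmem⟩
      rw [← hxy ⟨i, hmem⟩] at this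
      have heq := tlnY_restrict G ε δ τ b x hx0 ⟨i, hmem⟩
      rw [show (fun u : {v : Fin n // v ∈ τ} => x u.1) = y from funext hxy] at heq
      rw [this, heq]
    · ext i
      simp only [Set.mem_image, Set.mem_setOf_eq]
      constructor
      · rintro ⟨u, hu, rfl⟩; rw [hxy u]; exact hu
      · intro hi
        have hmem : i ∈ τ := by
          by_contra hmem
          rw [hx0 i (by simpa using hmem)] at hi; exact lt_irrefl _ hi
        exact ⟨⟨i, hmem⟩, by rw [← hxy ⟨i, hmem⟩]; exact hi, rfl⟩

end key

end FPred

/-- Corollary, gCTLN case: if `G̃ = G|_τ` is a domination-free induced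
subgraph obtained from `G` by iteratively removing dominated nodes `j_1,…,j_m` (with
`[n]∖τ = {j_1,…,j_m}`), then for any gCTLN parameters `ε_i ∈ (0,1)`, `δ_i > 0`, `θ > 0`,
the gCTLNs of `G` and of `G̃` (with restricted parameters) have the same fixed point
supports, identifying subsets of `τ` with their images in `[n]`. -/
theorem FP_eq_reduced_graph {n m : ℕ} (G : Fin n → Fin n → Prop) (hG : ∀ i, ¬ G i i)
    (τ : Finset (Fin n)) (j : Fin m → Fin n) (hjinj : Function.Injective j)
    (hτ : ∀ v, v ∉ τ ↔ ∃ i, j i = v)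
    (hjdom : ∀ i : Fin m, DominatedIn G {v | ∀ i' : Fin m, i' < i → v ≠ j i'} (j i))
    (hfree : DominationFreeOn G ↑τ)
    (ε δ : Fin n → ℝ) (hε : ∀ i, 0 < ε i ∧ ε i < 1) (hδ : ∀ i, 0 < δ i)
    (θ : ℝ) (hθ : 0 < θ) :
    FPsupp (gctlnW G ε δ) (fun _ => θ) =
      (Set.image (Subtype.val : {v : Fin n // v ∈ τ} → Fin n)) ''
        FPsupp (gctlnW (fun u v : {v : Fin n // v ∈ τ} => G u.1 v.1)
          (fun u => ε u.1) (fun u => δ u.1)) (fun _ => θ) := by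
  classical
  set b : Fin n → ℝ := fun _ => θ with hbdef
  have hb : ∀ i l, b i = b l := fun _ _ => rfl
  set T : ℕ → Set (Fin n) := fun N => {v | ∀ i' : Fin m, (i' : ℕ) < N → v ≠ j i'} with hT
  have hT0 : T 0 = Set.univ := by
    ext v; simp [hT]
  have hTsucc : ∀ N (hN : N < m), T (N + 1) = T N \ {j ⟨N, hN⟩} := by
    intro N hN
    ext v
    simp only [hT, Set.mem_diff, Set.mem_setOf_eq, Set.mem_singleton_iff]
    constructor
    · intro h
      exact ⟨fun i' hi' => h i' (Nat.lt_succ_of_lt hi'), h ⟨N, hN⟩ (Nat.lt_succ_self N)⟩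
    · rintro ⟨h1, h2⟩ i' hi'
      rcases Nat.lt_succ_iff_lt_or_eq.mp hi' with h | h
      · exact h1 i' h
      · have : i' = ⟨N, hN⟩ := Fin.ext h
        subst this; exact h2
  have hTdom : ∀ N (hN : N < m), DominatedIn G (T N) (j ⟨N, hN⟩) := by
    intro N hN
    have := hjdom ⟨N, hN⟩
    have hset : {v | ∀ i' : Fin m, i' < (⟨N, hN⟩ : Fin m) → v ≠ j i'} = T N := by
      ext v; simp only [hT, Set.mem_setOf_eq, Fin.lt_def]
    rwa [hset] at this
  have hTm : T m = ↑τ := by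
    ext v
    simp only [hT, Set.mem_setOf_eq, Finset.coe_mem, Set.mem_setOf_eq, Finset.mem_coe]
    constructor
    · intro h
      by_contra hv
      obtain ⟨i, hi⟩ := (hτ v).mp hv
      exact h i i.isLt hi.symm
    · intro hv i _ hji
      exact ((hτ v).mpr ⟨i, hji.symm⟩) hv
  have main : ∀ N, N ≤ m → FPred.FPon (gctlnW G ε δ) b Set.univ = FPred.FPon (gctlnW G ε δ) b (T N) := by
    intro N
    induction N with
    | zero => intro _; rw [hT0]
    | succ N ih =>
      intro hN
      have hNm : N < m := hN
      rw [ih (le_of_lt hNm), hTsucc N hNm]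
      exact FPred.FPon_remove G ε δ hε hδ b hb (hTdom N hNm)
  calc FPsupp (gctlnW G ε δ) b
      = FPred.FPon (gctlnW G ε δ) b Set.univ := FPred.FPsupp_eq_FPon_univ _ _
    _ = FPred.FPon (gctlnW G ε δ) b (T m) := main m le_rfl
    _ = FPred.FPon (gctlnW G ε δ) b ↑τ := by rw [hTm]
    _ = _ := FPred.FPon_coe G ε δ τ b
end

section
/- Let (W,b) be a TLN on n nodes such that k input dominates j, and let x* be any fixed point of (W,b). Then for every index i in the support of x*, the value x*_i coincides with the corresponding entry of the unique fixed point of the restricted TLN (W|_{[n]∖j}, b|_{[n]∖j}) with the same support; in particular, the fixed points of (W,b) are exactly the fixed points of (W|_{[n]∖j}, b|_{[n]∖j}) extended by a zero in coordinate j. -/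
lemma sum_restrict {n : ℕ} (j : Fin n) (f : Fin n → ℝ) (hfj : f j = 0) :
    ∑ l, f l = ∑ l : {i : Fin n // i ≠ j}, f l.1 := by
  rw [← Finset.sum_subtype (Finset.univ.erase j)
    (fun x => by simp [Finset.mem_erase]) f]
  rw [← Finset.add_sum_erase _ f (Finset.mem_univ j), hfj, zero_add]

lemma pointwise_le {n : ℕ} (W : Fin n → Fin n → ℝ) (b : Fin n → ℝ) (k j : Fin n)
    (hdom : InputDominates W b k j) (hkj : k ≠ j) (x : Fin n → ℝ) (hx : ∀ l, 0 ≤ x l)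
    (l : Fin n) :
    W j l * x l + (if l = k then x k else 0) ≤ W k l * x l + (if l = j then x j else 0) := by
  obtain ⟨h1, h2, h3, h4⟩ := hdom
  by_cases hlj : l = j
  · subst hlj
    rw [if_neg (fun h : l = k => hkj h.symm), if_pos rfl]
    nlinarith [hx l]
  · by_cases hlk : l = k
    · subst hlk
      rw [if_pos rfl, if_neg hlj]
      nlinarith [hx l]
    · rw [if_neg hlk, if_neg hlj]
      nlinarith [hx l, h1 l hlj hlk]

lemma sum_ineq {n : ℕ} (W : Fin n → Fin n → ℝ) (b : Fin n → ℝ) (k j : Fin n)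
    (hdom : InputDominates W b k j) (hkj : k ≠ j) (x : Fin n → ℝ) (hx : ∀ l, 0 ≤ x l) :
    tlnY W b x j + x k ≤ tlnY W b x k + x j := by
  have := Finset.sum_le_sum (s := Finset.univ)
    (fun l _ => pointwise_le W b k j hdom hkj x hx l)
  simp only [Finset.sum_add_distrib, Finset.sum_ite_eq' Finset.univ,
    Finset.mem_univ, if_pos] at this
  unfold tlnY
  linarith [hdom.2.2.2]

lemma sum_ineq_strict {n : ℕ} (W : Fin n → Fin n → ℝ) (b : Fin n → ℝ) (k j : Fin n)
    (hdom : InputDominates W b k j) (hkj : k ≠ j) (x : Fin n → ℝ) (hx : ∀ l, 0 ≤ x l)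
    (hxj : 0 < x j) :
    tlnY W b x j + x k < tlnY W b x k + x j := by
  have := Finset.sum_lt_sum (s := Finset.univ)
    (fun l _ => pointwise_le W b k j hdom hkj x hx l)
    ⟨j, Finset.mem_univ j, by
      rw [if_neg (fun h : j = k => hkj h.symm), if_pos rfl]
      nlinarith [hdom.2.1]⟩
  simp only [Finset.sum_add_distrib, Finset.sum_ite_eq' Finset.univ,
    Finset.mem_univ, if_pos] at this
  unfold tlnY
  linarith [hdom.2.2.2]


/-- if `k` input dominates `j` in `(W,b)`, then the fixed points of `(W,b)` are
exactly the fixed points of the restricted TLN `(W|_{[n]∖j}, b|_{[n]∖j})` extended by a zero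
in coordinate `j`; in particular every nonzero entry of a fixed point of `(W,b)` coincides
with the corresponding entry of the fixed point of the restricted TLN with the same support. -/
theorem fixed_points_eq_extensions {n : ℕ} (W : Fin n → Fin n → ℝ) (b : Fin n → ℝ)
    (k j : Fin n) (hdom : InputDominates W b k j) :
    {x : Fin n → ℝ | IsFixedPt W b x} =
      (fun x' : {i : Fin n // i ≠ j} → ℝ => fun i => if h : i = j then 0 else x' ⟨i, h⟩) ''
        {x' | IsFixedPt (fun a c : {i : Fin n // i ≠ j} => W a.1 c.1) (fun a => b a.1) x'} := by
  have hkj : k ≠ j := by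
    intro h; subst h
    have := hdom.2.1; have := hdom.2.2.1; linarith
  ext x
  simp only [Set.mem_setOf_eq, Set.mem_image]
  constructor
  · intro hx
    have hxnn : ∀ l, 0 ≤ x l := fun l => (hx l) ▸ le_max_right _ _
    -- x j = 0
    have hxj : x j = 0 := by
      by_contra h
      have hpos : 0 < x j := lt_of_le_of_ne (hxnn j) (Ne.symm h)
      have hyj : tlnY W b x j = x j := by
        have := hx j
        rcases le_or_gt (tlnY W b x j) 0 with hle | hlt
        · rw [max_eq_right hle] at this; exact absurd this h
        · rw [max_eq_left hlt.le] at this; exact this.symm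
      have hs := sum_ineq_strict W b k j hdom hkj x hxnn hpos
      rw [hyj] at hs
      have hk : x k < tlnY W b x k := by linarith
      have : x k = max (tlnY W b x k) 0 := hx k
      have := le_max_left (tlnY W b x k) 0
      linarith [this.trans_eq (hx k).symm]
    refine ⟨fun a => x a.1, ?_, ?_⟩
    · intro i
      have heq : tlnY W b x i.1 =
          tlnY (fun a c : {i : Fin n // i ≠ j} => W a.1 c.1) (fun a => b a.1)
            (fun a => x a.1) i := by
        unfold tlnY
        congr 1
        exact sum_restrict j (fun l => W i.1 l * x l) (by simp [hxj])
      rw [← heq]; exact hx i.1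
    · funext i
      by_cases h : i = j
      · subst h; simp [hxj]
      · simp [h]
  · rintro ⟨x', hx', rfl⟩
    set x : Fin n → ℝ := fun i => if h : i = j then 0 else x' ⟨i, h⟩ with hxdef
    have hxj : x j = 0 := by simp [hxdef]
    have heqy : ∀ i : {i : Fin n // i ≠ j}, tlnY W b x i.1 =
        tlnY (fun a c : {i : Fin n // i ≠ j} => W a.1 c.1) (fun a => b a.1) x' i := by
      intro i
      unfold tlnY
      congr 1
      rw [sum_restrict j (fun l => W i.1 l * x l) (by simp [hxj])]
      exact Finset.sum_congr rfl (fun l _ => by simp [hxdef, l.2])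
    have hxnn : ∀ l, 0 ≤ x l := by
      intro l
      by_cases h : l = j
      · simp [hxdef, h]
      · have : x l = x' ⟨l, h⟩ := by simp [hxdef, h]
        rw [this, hx' ⟨l, h⟩]; exact le_max_right _ _
    intro i
    by_cases h : i = j
    · have hxk : tlnY W b x k ≤ x k := by
        have : x k = x' ⟨k, hkj⟩ := by simp [hxdef, hkj]
        rw [this, hx' ⟨k, hkj⟩, ← heqy ⟨k, hkj⟩]
        exact le_max_left _ _
      have hs := sum_ineq W b k j hdom hkj x hxnn
      have hyj : tlnY W b x j ≤ 0 := by rw [hxj] at hs; linarith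
      rw [h, hxj, max_eq_right hyj]
    · have : x i = x' ⟨i, h⟩ := by simp [hxdef, h]
      rw [this, hx' ⟨i, h⟩, ← heqy ⟨i, h⟩]
end
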